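/- arXiv:1711.02756 — 2 statements merged into one kernel-verified Lean document; each statement's English description precedes it below -/
import Mathlib

section
/- Let S be a finite p-group and let L be a subgroup with 𝔛(S) ≤ L ≤ S. Then 𝔛(S) ≤ 𝔛(L). -/
/-- Iterated commutator of subgroups: `[A,B;0] = A`, `[A,B;k+1] = ⁅[A,B;k], B⁆`,
so `[A,B;1] = ⁅A,B⁆` and `[A,B;k] = [[A,B;k-1],B]`. -/
def iterCommutator {G : Type*} [Group G] (A B : Subgroup G) : ℕ → Subgroup G
  | 0 => A
  | k + 1 => ⁅iterCommutator A B k, B⁆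

/-- `Ω₁(P)`: the subgroup generated by the elements of `P` of order dividing `p`. -/
def Omega1 {G : Type*} [Group G] (p : ℕ) (P : Subgroup G) : Subgroup G :=
  Subgroup.closure {x | x ∈ P ∧ x ^ p = 1}

/-- Oliver's condition (∗) for a chain `⊥ = Q 0 ≤ Q 1 ≤ ⋯ ≤ Q n` of normal subgroups:
`[Ω₁(C_G(Q i)), Q (i+1); p-1] = 1` for all `i < n`. -/
def IsOliverChain {G : Type*} [Group G] (p : ℕ) (Q : ℕ → Subgroup G) (n : ℕ) : Prop :=
  Q 0 = ⊥ ∧ (∀ i < n, Q i ≤ Q (i + 1)) ∧ (∀ i ≤ n, (Q i).Normal) ∧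
    ∀ i < n,
      iterCommutator (Omega1 p (Subgroup.centralizer (Q i : Set G))) (Q (i + 1)) (p - 1) = ⊥

/-- A (normal) subgroup `K` admits a chain witnessing Oliver's condition (∗). -/
def HasOliverChain {G : Type*} [Group G] (p : ℕ) (K : Subgroup G) : Prop :=
  ∃ n Q, IsOliverChain p Q n ∧ Q n = K

/-- The Oliver subgroup `𝔛(G)`: the largest normal subgroup of `G` admitting a chain of
`G`-normal subgroups satisfying Oliver's condition (∗). -/
def OliverSubgroup (p : ℕ) (G : Type*) [Group G] : Subgroup G :=
  sSup {K | HasOliverChain p K}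

/-- `E` is an elementary abelian `p`-subgroup. -/
def IsElemAbelian {G : Type*} [Group G] (p : ℕ) (E : Subgroup G) : Prop :=
  (∀ a ∈ E, ∀ b ∈ E, a * b = b * a) ∧ ∀ x ∈ E, x ^ p = 1

/-- The rank of a finite elementary abelian `p`-subgroup `E` (so `|E| = p ^ elemRank p E`). -/
noncomputable def elemRank {G : Type*} [Group G] (p : ℕ) (E : Subgroup G) : ℕ :=
  (Nat.card E).factorization p

/-- The `p`-rank of `G`: the maximal rank of an elementary abelian `p`-subgroup. -/
noncomputable def pRank (p : ℕ) (G : Type*) [Group G] : ℕ :=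
  sSup {n | ∃ E : Subgroup G, IsElemAbelian p E ∧ elemRank p E = n}

/-- The Thompson subgroup `J(G)`, generated by all elementary abelian `p`-subgroups of
rank equal to the `p`-rank of `G`. -/
def Thompson (p : ℕ) (G : Type*) [Group G] : Subgroup G :=
  sSup {E | IsElemAbelian p E ∧ elemRank p E = pRank p G}

lemma map_iterCommutator {G H : Type*} [Group G] [Group H] (f : G →* H)
    (A B : Subgroup G) (k : ℕ) :
    (iterCommutator A B k).map f = iterCommutator (A.map f) (B.map f) k := by
  induction k with
  | zero => rfl
  | succ k ih => simp [iterCommutator, Subgroup.map_commutator, ih]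

lemma iterCommutator_mono {G : Type*} [Group G] {A A' B B' : Subgroup G}
    (hA : A ≤ A') (hB : B ≤ B') (k : ℕ) :
    iterCommutator A B k ≤ iterCommutator A' B' k := by
  induction k with
  | zero => exact hA
  | succ k ih => exact Subgroup.commutator_mono ih hB

lemma Omega1_mono {G : Type*} [Group G] (p : ℕ) {P P' : Subgroup G} (h : P ≤ P') :
    Omega1 p P ≤ Omega1 p P' :=
  Subgroup.closure_mono (fun x hx => ⟨h hx.1, hx.2⟩)

lemma map_Omega1_le {G H : Type*} [Group G] [Group H] (f : G →* H) (p : ℕ)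
    (P : Subgroup G) : (Omega1 p P).map f ≤ Omega1 p (P.map f) := by
  rw [Omega1, MonoidHom.map_closure]
  refine Subgroup.closure_mono ?_
  rintro y ⟨z, ⟨hz, hzp⟩, rfl⟩
  exact ⟨⟨z, hz, rfl⟩, by rw [← map_pow, hzp, map_one]⟩

lemma map_centralizer_subgroupOf_le {G : Type*} [Group G] {L Q : Subgroup G}
    (hQL : Q ≤ L) :
    (Subgroup.centralizer ((Q.subgroupOf L : Subgroup L) : Set L)).map L.subtype
      ≤ Subgroup.centralizer (Q : Set G) := by
  rintro _ ⟨l, hl, rfl⟩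
  rw [SetLike.mem_coe, Subgroup.mem_centralizer_iff] at hl
  rw [Subgroup.mem_centralizer_iff]
  intro q hq
  have hq' : (⟨q, hQL hq⟩ : L) ∈ Q.subgroupOf L := by
    rw [Subgroup.mem_subgroupOf]; exact hq
  simpa using congrArg (Subtype.val) (hl ⟨q, hQL hq⟩ hq')

theorem oliver_mono_aux (p : ℕ) (S : Type*) [Group S]
    (L : Subgroup S) (hL : OliverSubgroup p S ≤ L) :
    OliverSubgroup p S ≤ Subgroup.map L.subtype (OliverSubgroup p L) := by
  refine sSup_le fun K hK => ?_
  obtain ⟨n, Q, ⟨h0, hmono, hnorm, hkey⟩, rfl⟩ := hK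
  have hQle : ∀ i ≤ n, Q i ≤ Q n := by
    have key : ∀ k i, i + k ≤ n → Q i ≤ Q (i + k) := by
      intro k
      induction k with
      | zero => intro i _; exact le_rfl
      | succ k ih =>
        intro i h
        refine (ih i (by omega)).trans ?_
        have := hmono (i + k) (by omega)
        exact this
    intro i hi
    have := key (n - i) i (by omega)
    rwa [Nat.add_sub_cancel' hi] at this
  have hQL : ∀ i ≤ n, Q i ≤ L := fun i hi =>
    le_trans (hQle i hi) (le_trans (le_sSup (show Q n ∈ {K : Subgroup S | HasOliverChain p K} from ⟨n, Q, ⟨h0, hmono, hnorm, hkey⟩, rfl⟩)) hL)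
  set Q' : ℕ → Subgroup L := fun i => (Q i).subgroupOf L with hQ'
  have hchain : HasOliverChain p (Q' n) := by
    refine ⟨n, Q', ⟨?_, ?_, ?_, ?_⟩, rfl⟩
    · show (Q 0).subgroupOf L = ⊥
      rw [h0, Subgroup.bot_subgroupOf]
    · intro i hi
      exact Subgroup.comap_mono (hmono i hi)
    · intro i hi
      exact (hnorm i hi).comap L.subtype
    · intro i hi
      have hinj : Function.Injective L.subtype := Subgroup.subtype_injective L
      rw [← Subgroup.map_eq_bot_iff_of_injective _ hinj]
      refine le_bot_iff.mp ?_
      rw [map_iterCommutator]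
      calc iterCommutator ((Omega1 p (Subgroup.centralizer ((Q' i : Subgroup L) : Set L))).map
            L.subtype) ((Q' (i+1)).map L.subtype) (p - 1)
          ≤ iterCommutator (Omega1 p (Subgroup.centralizer ((Q i : Subgroup S) : Set S)))
            (Q (i+1)) (p - 1) := by
            refine iterCommutator_mono ?_ ?_ _
            · exact le_trans (map_Omega1_le _ _ _)
                (Omega1_mono p (map_centralizer_subgroupOf_le (hQL i (le_of_lt hi))))
            · rw [Subgroup.subgroupOf_map_subtype]
              exact inf_le_left
        _ = ⊥ := hkey i hi
  have : Q' n ≤ OliverSubgroup p L := le_sSup (show Q' n ∈ {K : Subgroup L | HasOliverChain p K} from hchain)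
  have hmap : (Q' n).map L.subtype = Q n := by
    rw [hQ', Subgroup.subgroupOf_map_subtype, inf_eq_left.mpr (hQL n le_rfl)]
  calc Q n = (Q' n).map L.subtype := hmap.symm
    _ ≤ (OliverSubgroup p L).map L.subtype := Subgroup.map_mono this


/-- if `𝔛(S) ≤ L ≤ S` then `𝔛(S) ≤ 𝔛(L)`. -/
theorem oliver_mono (p : ℕ) [Fact p.Prime] (S : Type*) [Group S] [Fintype S]
    (hS : IsPGroup p S) (L : Subgroup S) (hL : OliverSubgroup p S ≤ L) :
    OliverSubgroup p S ≤ Subgroup.map L.subtype (OliverSubgroup p L) :=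
  oliver_mono_aux p S L hL
end

section
/- Let S be a finite p-group, p odd, and let L ≤ S with 𝔛(S) ≤ L. Suppose R ⊴ L satisfies 𝔛(S) ≤ R, R ⊴ S, and [Ω₁(C_L(𝔛(S))), R; p-1] = 1. Then R ≤ 𝔛(S), hence R = 𝔛(S). -/
/-!
By Oliver's lemma the centralizer of `𝔛(S)` lies in `𝔛(S)`, hence in `L`, so the
hypothesis on `R` is exactly Oliver's condition (∗) for the step `𝔛(S) ≤ R`. Appending `R`
to a chain for `𝔛(S)` gives a chain for `R`, and `𝔛(S)` contains every subgroup admitting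
such a chain.

Oliver's lemma itself: if `C = C_S(𝔛(S))` were not inside `X = 𝔛(S)`, the preimage `Q` of
`CX/X ∩ Z(S/X)` would be a normal subgroup, not inside `X`, with `[C, Q] ≤ C ∩ X = Z(X)` and
`[Z(X), Q] = 1` (as `Q ≤ XC`); so `[Ω₁(C), Q; 2] = 1`, and since `p - 1 ≥ 2` the subgroup `Q`
extends the chain of `X`, a contradiction. That `𝔛(S)` admits a chain at all rests on chains
being closed under joins: `[Ω₁(C(K₁K)), K₁Q; k] ≤ [Ω₁(C(K)), Q; k]` because `Ω₁(C(K₁K))`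
centralizes `K₁`.
-/

open Subgroup

section Commutators

variable {G : Type*} [Group G]

theorem commutator_le_iff_map_le_centralizer (A B D : Subgroup G) [D.Normal] :
    ⁅A, B⁆ ≤ D ↔
      B.map (QuotientGroup.mk' D) ≤ centralizer (A.map (QuotientGroup.mk' D) : Set (G ⧸ D)) := by
  rw [← commutator_eq_bot_iff_le_centralizer, commutator_comm, ← map_commutator,
    Subgroup.map_eq_bot_iff, QuotientGroup.ker_mk']

theorem commutator_sup_le {A B K D : Subgroup G} [D.Normal] (hB : ⁅A, B⁆ ≤ D)
    (hK : ⁅A, K⁆ ≤ D) : ⁅A, B ⊔ K⁆ ≤ D := by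
  rw [commutator_le_iff_map_le_centralizer, Subgroup.map_sup]
  exact sup_le ((commutator_le_iff_map_le_centralizer A B D).mp hB)
    ((commutator_le_iff_map_le_centralizer A K D).mp hK)

theorem normal_of_le_center {H : Subgroup G} (h : H ≤ center G) : H.Normal :=
  commutator_top_left_le_iff.mp <|
    (commutator_top_left_eq_bot_iff_le_center.mpr h).le.trans bot_le

end Commutators

section IterCommutator

variable {G : Type*} [Group G]

theorem iterCommutator_mono_left {A A' : Subgroup G} (h : A ≤ A') (B : Subgroup G) :
    ∀ k, iterCommutator A B k ≤ iterCommutator A' B k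
  | 0 => h
  | k + 1 => commutator_mono (iterCommutator_mono_left h B k) le_rfl

theorem iterCommutator_normal {A B : Subgroup G} [A.Normal] [B.Normal] :
    ∀ k, (iterCommutator A B k).Normal
  | 0 => ‹_›
  | k + 1 => by
    have := iterCommutator_normal (A := A) (B := B) k
    exact commutator_normal _ _

theorem iterCommutator_eq_bot_of_le {A B : Subgroup G} {k m : ℕ}
    (h : iterCommutator A B k = ⊥) (hkm : k ≤ m) : iterCommutator A B m = ⊥ := by
  induction m, hkm using Nat.le_induction with
  | base => exact h
  | succ m _ ih => exact (congrArg (⁅·, B⁆) ih).trans (commutator_bot_left B)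

theorem iterCommutator_sup_le_inf_centralizer {X X' B K : Subgroup G} [X'.Normal] [B.Normal]
    [K.Normal] (hXX' : X ≤ X') (hXK : X ≤ centralizer (K : Set G)) :
    ∀ k, iterCommutator X (B ⊔ K) k ≤ iterCommutator X' B k ⊓ centralizer (K : Set G)
  | 0 => le_inf hXX' hXK
  | k + 1 => by
    have ih := iterCommutator_sup_le_inf_centralizer (B := B) hXX' hXK k
    have := iterCommutator_normal (A := X') (B := B) k
    show ⁅iterCommutator X (B ⊔ K) k, B ⊔ K⁆ ≤ ⁅iterCommutator X' B k, B⁆ ⊓ _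
    refine le_inf (commutator_sup_le (commutator_mono (ih.trans inf_le_left) le_rfl) ?_) ?_
    · exact (commutator_eq_bot_iff_le_centralizer.mpr (ih.trans inf_le_right)).le.trans bot_le
    · exact (commutator_mono (ih.trans inf_le_right) le_rfl).trans (commutator_le_left _ _)

end IterCommutator

section Omega1

variable {G : Type*} [Group G] (p : ℕ)

theorem omega1_le (P : Subgroup G) : Omega1 p P ≤ P :=
  (closure_le P).mpr fun _ hx => hx.1

theorem omega1_mono {P P' : Subgroup G} (h : P ≤ P') : Omega1 p P ≤ Omega1 p P' :=
  closure_mono fun _ hx => ⟨h hx.1, hx.2⟩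

theorem omega1_normal (P : Subgroup G) [hP : P.Normal] : (Omega1 p P).Normal :=
  normalizer_eq_top_iff.mp <| top_unique <| le_normalizer_closure_iff.mpr fun g _ x hx =>
    subset_closure ⟨hP.conj_mem x hx.1 g, by rw [conj_pow, hx.2, mul_one, mul_inv_cancel]⟩

end Omega1

section Chains

variable {G : Type*} [Group G] {p : ℕ}

theorem IsOliverChain.of_le {Q : ℕ → Subgroup G} {n m : ℕ} (h : IsOliverChain p Q n)
    (hmn : m ≤ n) : IsOliverChain p Q m :=
  ⟨h.1, fun i hi => h.2.1 i (by omega), fun i hi => h.2.2.1 i (by omega),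
    fun i hi => h.2.2.2 i (by omega)⟩

theorem hasOliverChain_bot (p : ℕ) : HasOliverChain p (⊥ : Subgroup G) :=
  ⟨0, fun _ => ⊥, ⟨rfl, nofun, fun _ _ => inferInstance, nofun⟩, rfl⟩

theorem HasOliverChain.normal {K : Subgroup G} (h : HasOliverChain p K) : K.Normal := by
  obtain ⟨n, Q, hQ, rfl⟩ := h
  exact hQ.2.2.1 n le_rfl

theorem HasOliverChain.extend {K Q : Subgroup G} (hK : HasOliverChain p K) (hKQ : K ≤ Q)
    [hQ : Q.Normal]
    (hc : iterCommutator (Omega1 p (centralizer (K : Set G))) Q (p - 1) = ⊥) :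
    HasOliverChain p Q := by
  obtain ⟨n, Qc, ⟨h0, hmono, hnormal, hcomm⟩, rfl⟩ := hK
  refine ⟨n + 1, fun i => if i ≤ n then Qc i else Q, ⟨by simpa using h0, ?_, ?_, ?_⟩,
    by simp⟩
  · intro i hi
    rcases Nat.lt_succ_iff_lt_or_eq.mp hi with hi | rfl
    · simpa [hi.le, Nat.succ_le_of_lt hi] using hmono i hi
    · simpa using hKQ
  · intro i _
    by_cases h : i ≤ n
    · simpa [h] using hnormal i h
    · simpa [h] using hQ
  · intro i hi
    rcases Nat.lt_succ_iff_lt_or_eq.mp hi with hi | rfl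
    · simpa [hi.le, Nat.succ_le_of_lt hi] using hcomm i hi
    · simpa using hc

@[elab_as_elim]
theorem HasOliverChain.induction {motive : Subgroup G → Prop} (bot : motive ⊥)
    (extend : ∀ K Q : Subgroup G, HasOliverChain p K → motive K → K ≤ Q → Q.Normal →
      iterCommutator (Omega1 p (centralizer (K : Set G))) Q (p - 1) = ⊥ → motive Q)
    {K : Subgroup G} (hK : HasOliverChain p K) : motive K := by
  obtain ⟨n, Q, hQ, rfl⟩ := hK
  suffices ∀ i ≤ n, motive (Q i) from this n le_rfl
  intro i hi
  induction i with
  | zero => exact hQ.1 ▸ bot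
  | succ i ih =>
    exact extend (Q i) (Q (i + 1)) ⟨i, Q, hQ.of_le (by omega), rfl⟩ (ih (by omega))
      (hQ.2.1 i hi) (hQ.2.2.1 (i + 1) hi) (hQ.2.2.2 i hi)

theorem iterCommutator_omega1_centralizer_sup_eq_bot {K₁ K Q : Subgroup G} [K₁.Normal]
    [K.Normal] [Q.Normal] {k : ℕ}
    (h : iterCommutator (Omega1 p (centralizer (K : Set G))) Q k = ⊥) :
    iterCommutator (Omega1 p (centralizer ((K₁ ⊔ K : Subgroup G) : Set G))) (K₁ ⊔ Q) k = ⊥ := by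
  have := omega1_normal p (centralizer (K : Set G))
  rw [sup_comm K₁ Q]
  refine le_bot_iff.mp <|
    (iterCommutator_sup_le_inf_centralizer ?_ ?_ k).trans (inf_le_left.trans h.le)
  · exact omega1_mono p (centralizer_le (SetLike.coe_subset_coe.mpr le_sup_right))
  · exact (omega1_le p _).trans (centralizer_le (SetLike.coe_subset_coe.mpr le_sup_left))

theorem HasOliverChain.sup {K₁ K₂ : Subgroup G} (h₁ : HasOliverChain p K₁)
    (h₂ : HasOliverChain p K₂) : HasOliverChain p (K₁ ⊔ K₂) := by
  have := h₁.normal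
  refine h₂.induction (by simpa using h₁) fun K Q hK ih hKQ hQ hc => ?_
  have := hK.normal
  exact ih.extend (sup_le_sup_left hKQ K₁) (iterCommutator_omega1_centralizer_sup_eq_bot hc)

theorem hasOliverChain_oliverSubgroup (p : ℕ) (G : Type*) [Group G] [Finite G] :
    HasOliverChain p (OliverSubgroup p G) := by
  have hsup : SupClosed {K : Subgroup G | HasOliverChain p K} := fun _ h₁ _ h₂ => h₁.sup h₂
  exact hsup.sSup_mem (Set.toFinite _) (hasOliverChain_bot p) subset_rfl

theorem le_oliverSubgroup {K : Subgroup G} (h : HasOliverChain p K) : K ≤ OliverSubgroup p G :=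
  le_sSup h

end Chains

theorem IsPGroup.inf_center_ne_bot {p : ℕ} [Fact p.Prime] {G : Type*} [Group G] [Finite G]
    (hG : IsPGroup p G) {N : Subgroup G} [N.Normal] (hN : N ≠ ⊥) : N ⊓ center G ≠ ⊥ := by
  have : Nontrivial N := (bot_or_nontrivial N).resolve_left hN
  obtain ⟨b, hb, hb1⟩ :=
    (hG.of_equiv ConjAct.toConjAct).exists_fixed_point_of_prime_dvd_card_of_fixed_point (α := N)
      ((hG.to_subgroup N).card_eq_or_dvd.resolve_left Finite.one_lt_card.ne')
      (a := 1) (fun g => smul_one g)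
  have hbcenter : (b : G) ∈ center G := by
    rw [← SetLike.mem_coe, ← ConjAct.fixedPoints_eq_center]
    intro g
    simpa only [ConjAct.Subgroup.val_conj_smul] using congrArg Subtype.val (hb g)
  refine ne_bot_iff_exists_ne_one.mpr ⟨⟨b, b.2, hbcenter⟩, fun h => hb1 ?_⟩
  exact Subtype.ext (congrArg Subtype.val h).symm

theorem centralizer_oliverSubgroup_le {p : ℕ} [hp : Fact p.Prime] (hodd : Odd p) {G : Type*}
    [Group G] [Finite G] (hG : IsPGroup p G) :
    centralizer (OliverSubgroup p G : Set G) ≤ OliverSubgroup p G := by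
  set X := OliverSubgroup p G
  set C := centralizer (X : Set G)
  have hXchain := hasOliverChain_oliverSubgroup p G
  have := hXchain.normal
  have hπ := QuotientGroup.mk'_surjective X
  set π := QuotientGroup.mk' X
  set Z := C.map π ⊓ center (G ⧸ X)
  have := normal_of_le_center (inf_le_right : Z ≤ _)
  set Q := Z.comap π
  have hQZ : Q.map π = Z := map_comap_eq_self_of_surjective hπ Z
  have hQXC : Q ≤ X ⊔ C := (comap_mono inf_le_left).trans (QuotientGroup.comap_map_mk' X C).le
  have hCQ : ⁅C, Q⁆ ≤ C ⊓ X := by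
    refine le_inf (commutator_le_left C Q) ((commutator_le_iff_map_le_centralizer C Q X).mpr ?_)
    exact hQZ.le.trans (inf_le_right.trans (center_le_centralizer _))
  have hQC : C ⊓ X ≤ centralizer (Q : Set G) :=
    le_centralizer_iff.mp <| hQXC.trans <| sup_le (le_centralizer_iff.mp inf_le_left)
      (centralizer_le (SetLike.coe_subset_coe.mpr inf_le_right))
  have h2 : iterCommutator (Omega1 p C) Q 2 = ⊥ :=
    le_bot_iff.mp <| (iterCommutator_mono_left (omega1_le p C) Q 2).trans <|
      (commutator_mono hCQ le_rfl).trans (commutator_eq_bot_iff_le_centralizer.mpr hQC).le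
  have two_le_pred : 2 ≤ p - 1 := by
    obtain ⟨k, rfl⟩ := hodd
    have := hp.out.two_le
    omega
  have hQX : Q ≤ X :=
    le_oliverSubgroup (hXchain.extend (QuotientGroup.le_comap_mk' X Z)
      (iterCommutator_eq_bot_of_le h2 two_le_pred))
  have hZ : Z = ⊥ :=
    hQZ ▸ (Subgroup.map_eq_bot_iff Q).mpr (hQX.trans (QuotientGroup.ker_mk' X).ge)
  have hC : C.map π = ⊥ := by
    by_contra h
    have := Normal.map inferInstance π hπ (H := C)
    exact (hG.to_quotient X).inf_center_ne_bot h hZ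
  rwa [Subgroup.map_eq_bot_iff, QuotientGroup.ker_mk'] at hC

theorem core_step_general (p : ℕ) [Fact p.Prime] (hp : Odd p)
    (S : Type*) [Group S] [Fintype S] (hS : IsPGroup p S)
    (L R : Subgroup S) (hXL : OliverSubgroup p S ≤ L)
    (hXR : OliverSubgroup p S ≤ R) (hRnorm : R.Normal)
    (hcomm : iterCommutator
        (Omega1 p (Subgroup.centralizer ((OliverSubgroup p S : Subgroup S) : Set S) ⊓ L))
        R (p - 1) = ⊥) :
    R ≤ OliverSubgroup p S ∧ R = OliverSubgroup p S := by
  have hC := centralizer_oliverSubgroup_le hp hS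
  rw [inf_eq_left.mpr (hC.trans hXL)] at hcomm
  have hRX := le_oliverSubgroup (hasOliverChain_oliverSubgroup p S |>.extend hXR hcomm)
  exact ⟨hRX, le_antisymm hRX hXR⟩

/-- core step of Theorems 1.2 and 1.5: let `𝔛(S) ≤ L ≤ S` and `R ⊴ L`
with `𝔛(S) ≤ R`, `R ⊴ S` and `[Ω₁(C_L(𝔛(S))), R; p-1] = 1`. Then `R ≤ 𝔛(S)`,
hence `R = 𝔛(S)`. -/
theorem core_step (p : ℕ) [Fact p.Prime] (hp : Odd p)
    (S : Type*) [Group S] [Fintype S] (hS : IsPGroup p S)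
    (L R : Subgroup S) (hXL : OliverSubgroup p S ≤ L)
    (hRL : R ≤ L) (hRnormL : (R.subgroupOf L).Normal)
    (hXR : OliverSubgroup p S ≤ R) (hRnorm : R.Normal)
    (hcomm : iterCommutator
        (Omega1 p (Subgroup.centralizer ((OliverSubgroup p S : Subgroup S) : Set S) ⊓ L))
        R (p - 1) = ⊥) :
    R ≤ OliverSubgroup p S ∧ R = OliverSubgroup p S :=
  core_step_general p hp S hS L R hXL hXR hRnorm hcomm
end
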